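/- Suppose a = (a_1,...,a_n) with pairwise distinct components, and suppose for some i there exist a Borel set C with W_{a_i}(Γ) ⊆ C ⊆ V_{a_i}(Γ) and a point z ∈ E with ∫_C ‖x - z‖^r dP(x) < ∫_C ‖x - a_i‖^r dP(x), where r ≥ 1. Then a is not a local minimum of the L^r-distortion function G. (Key step: along the segment y_s = s z + (1-s) a_i, convexity of the one-point distortion on C gives ∫_C ‖x - y_s‖^r dP(x) < ∫_C ‖x - a_i‖^r dP(x) for all s ∈ (0,1], and replacing a_i by y_s strictly decreases G.) -/

import Mathlib

/-!
Move the centre `a i` along the segment towards `z`. The map `y ↦ ∫_C ‖x - y‖ ^ r dP` is convex,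
so it drops strictly below its value at `a i` at every point `y` of the segment other than `a i`.
Replacing `a i` by `y` therefore decreases the distortion on `C`, where `a i` was a nearest
centre, and does not increase it off `C`, where some other centre is at least as close as `a i`.
Since these points come arbitrarily close to `a`, `a` is not a local minimum.
-/

open MeasureTheory EMetric Set Filter Topology

lemma integrable_norm_sub_rpow {E : Type*} [NormedAddCommGroup E] [MeasurableSpace E]
    [OpensMeasurableSpace E] {μ : Measure E} [IsFiniteMeasure μ] {r : ℝ} (hr : 0 < r)
    (hint : Integrable (fun x => ‖x‖ ^ r) μ) (c : E) :
    Integrable (fun x => ‖x - c‖ ^ r) μ := by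
  have hp : (ENNReal.ofReal r).toReal = r := ENNReal.toReal_ofReal hr.le
  have hp0 : ENNReal.ofReal r ≠ 0 := by simpa using hr
  have hnorm : MemLp (fun x : E => ‖x‖) (ENNReal.ofReal r) μ := by
    rw [← integrable_norm_rpow_iff (by fun_prop) hp0 ENNReal.ofReal_ne_top]
    simpa [hp] using hint
  have hsub : MemLp (fun x => ‖x - c‖) (ENNReal.ofReal r) μ :=
    (hnorm.add (memLp_const ‖c‖)).mono (continuous_sub_right c).norm.aestronglyMeasurable <|
      ae_of_all _ fun x => by
        simpa [abs_of_nonneg (add_nonneg (norm_nonneg x) (norm_nonneg c))] using norm_sub_le x c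
  simpa [hp] using hsub.integrable_norm_rpow hp0 ENNReal.ofReal_ne_top

lemma integral_lt_integral_of_setIntegral_lt {α : Type*} [MeasurableSpace α] {μ : Measure α}
    {f g : α → ℝ} (hf : Integrable f μ) (hg : Integrable g μ) {C : Set α} (hC : MeasurableSet C)
    (hlt : ∫ x in C, f x ∂μ < ∫ x in C, g x ∂μ) (hle : ∀ x ∈ Cᶜ, f x ≤ g x) :
    ∫ x, f x ∂μ < ∫ x, g x ∂μ := by
  rw [← integral_add_compl hC hf, ← integral_add_compl hC hg]
  exact add_lt_add_of_lt_of_le hlt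
    (setIntegral_mono_on hf.integrableOn hg.integrableOn hC.compl hle)

lemma ConvexOn.apply_lineMap_lt {E : Type*} [AddCommGroup E] [Module ℝ E] {S : Set E}
    {f : E → ℝ} (hf : ConvexOn ℝ S f) {a z : E} (ha : a ∈ S) (hz : z ∈ S) (hlt : f z < f a)
    {s : ℝ} (hs : s ∈ Ioc 0 1) : f (AffineMap.lineMap a z s) < f a := by
  have hconv : f ((1 - s) • a + s • z) ≤ (1 - s) * f a + s * f z :=
    hf.2 ha hz (by linarith [hs.2]) hs.1.le (by ring)
  rw [AffineMap.lineMap_apply_module]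
  nlinarith [hs.1]

section NearestCentre

variable {E : Type*} [NormedAddCommGroup E]

lemma convexOn_norm_sub_rpow [NormedSpace ℝ E] {r : ℝ} (hr : 1 ≤ r) (x : E) :
    ConvexOn ℝ univ (fun y => ‖x - y‖ ^ r) := by
  refine ⟨convex_univ, fun y₁ _ y₂ _ t₁ t₂ ht₁ ht₂ ht => ?_⟩
  have htri : ‖x - (t₁ • y₁ + t₂ • y₂)‖ ≤ t₁ * ‖x - y₁‖ + t₂ * ‖x - y₂‖ := by
    have hx : x - (t₁ • y₁ + t₂ • y₂) = t₁ • (x - y₁) + t₂ • (x - y₂) := by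
      linear_combination (norm := module) -(ht • x)
    rw [hx]
    refine (norm_add_le _ _).trans_eq ?_
    rw [norm_smul, norm_smul, Real.norm_of_nonneg ht₁, Real.norm_of_nonneg ht₂]
  calc ‖x - (t₁ • y₁ + t₂ • y₂)‖ ^ r ≤ (t₁ * ‖x - y₁‖ + t₂ * ‖x - y₂‖) ^ r :=
        Real.rpow_le_rpow (norm_nonneg _) htri (by linarith)
    _ ≤ t₁ • ‖x - y₁‖ ^ r + t₂ • ‖x - y₂‖ ^ r :=
        (convexOn_rpow hr).2 (norm_nonneg _) (norm_nonneg _) ht₁ ht₂ ht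

lemma convexOn_integral_norm_sub_rpow [NormedSpace ℝ E] [MeasurableSpace E] {μ : Measure E}
    {r : ℝ} (hr : 1 ≤ r) (hint : ∀ c, Integrable (fun x => ‖x - c‖ ^ r) μ) :
    ConvexOn ℝ univ (fun y => ∫ x, ‖x - y‖ ^ r ∂μ) := by
  refine ⟨convex_univ, fun y₁ _ y₂ _ t₁ t₂ ht₁ ht₂ ht => ?_⟩
  calc ∫ x, ‖x - (t₁ • y₁ + t₂ • y₂)‖ ^ r ∂μ
      ≤ ∫ x, (t₁ * ‖x - y₁‖ ^ r + t₂ * ‖x - y₂‖ ^ r) ∂μ :=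
        integral_mono (hint _) (((hint y₁).const_mul t₁).add ((hint y₂).const_mul t₂))
          fun x => (convexOn_norm_sub_rpow hr x).2 trivial trivial ht₁ ht₂ ht
    _ = t₁ • ∫ x, ‖x - y₁‖ ^ r ∂μ + t₂ • ∫ x, ‖x - y₂‖ ^ r ∂μ := by
        rw [integral_add ((hint y₁).const_mul t₁) ((hint y₂).const_mul t₂), integral_const_mul,
          integral_const_mul, smul_eq_mul, smul_eq_mul]

lemma norm_le_norm_of_edist_le {x p q : E} (h : edist x p ≤ edist x q) : ‖x - p‖ ≤ ‖x - q‖ := by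
  rwa [edist_dist, edist_dist, ENNReal.ofReal_le_ofReal_iff dist_nonneg, dist_eq_norm,
    dist_eq_norm] at h

variable {ι : Type*}

lemma iInf_norm_sub_le (b : ι → E) (x : E) (j : ι) : ⨅ k, ‖x - b k‖ ≤ ‖x - b j‖ :=
  ciInf_le ⟨0, by rintro _ ⟨k, rfl⟩; exact norm_nonneg _⟩ j

lemma iInf_norm_sub_eq_of_edist_eq_infEDist {a : ι → E} {i : ι} {x : E}
    (hx : edist x (a i) = Metric.infEDist x (range a)) : ⨅ j, ‖x - a j‖ = ‖x - a i‖ := by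
  have : Nonempty ι := ⟨i⟩
  refine le_antisymm (iInf_norm_sub_le a x i) (le_ciInf fun j => norm_le_norm_of_edist_le ?_)
  exact hx.trans_le (Metric.infEDist_le_edist_of_mem (mem_range_self j))

lemma iInf_norm_sub_update_le [Finite ι] [DecidableEq ι] {a : ι → E} {i : ι} {x : E}
    (hx : Metric.infEDist x (range a \ {a i}) ≤ edist x (a i)) (y : E) :
    ⨅ j, ‖x - Function.update a i y j‖ ≤ ⨅ j, ‖x - a j‖ := by
  have : Nonempty ι := ⟨i⟩
  have hne : (range a \ {a i}).Nonempty := by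
    by_contra hempty
    rw [not_nonempty_iff_eq_empty.mp hempty, Metric.infEDist_empty, top_le_iff] at hx
    exact edist_ne_top x (a i) hx
  obtain ⟨_, ⟨⟨k, rfl⟩, hk⟩, hdist⟩ :=
    (finite_range a).sdiff.isCompact.exists_infEDist_eq_edist hne x
  -- `a k` is a nearest centre different from `a i`, so it survives the update.
  have hki : k ≠ i := fun h => hk (h ▸ rfl)
  have hnearest : ∀ j, ‖x - a k‖ ≤ ‖x - a j‖ := fun j => by
    refine norm_le_norm_of_edist_le (hdist ▸ ?_)
    by_cases hj : a j = a i
    · exact hj ▸ hx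
    · exact Metric.infEDist_le_edist_of_mem ⟨mem_range_self j, hj⟩
  calc ⨅ j, ‖x - Function.update a i y j‖ ≤ ‖x - a k‖ := by
        simpa [Function.update_of_ne hki] using iInf_norm_sub_le (Function.update a i y) x k
    _ ≤ ⨅ j, ‖x - a j‖ := le_ciInf hnearest

end NearestCentre

noncomputable def distortion {E ι : Type*} [NormedAddCommGroup E] [MeasurableSpace E]
    (P : Measure E) (r : ℝ) (b : ι → E) : ℝ :=
  ∫ x, (⨅ j, ‖x - b j‖) ^ r ∂P

section Improvement

variable {E ι : Type*} [NormedAddCommGroup E] [MeasurableSpace E] [OpensMeasurableSpace E]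
  {P : Measure E} {r : ℝ}

lemma integrable_iInf_norm_sub_rpow [Countable ι] [Nonempty ι] (hr : 0 ≤ r)
    (hint : ∀ c, Integrable (fun x => ‖x - c‖ ^ r) P) (b : ι → E) :
    Integrable (fun x => (⨅ j, ‖x - b j‖) ^ r) P := by
  obtain ⟨j⟩ := ‹Nonempty ι›
  have hmeas : Measurable fun x => (⨅ j, ‖x - b j‖) ^ r :=
    (Measurable.iInf fun j => (continuous_sub_right (b j)).norm.measurable).pow_const r
  refine (hint (b j)).mono' hmeas.aestronglyMeasurable (ae_of_all _ fun x => ?_)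
  have hnonneg : 0 ≤ ⨅ j, ‖x - b j‖ := Real.iInf_nonneg fun j => norm_nonneg _
  rw [Real.norm_of_nonneg (Real.rpow_nonneg hnonneg r)]
  exact Real.rpow_le_rpow hnonneg (iInf_norm_sub_le b x j) hr

variable [NormedSpace ℝ E] [IsFiniteMeasure P] [Finite ι] [DecidableEq ι]

lemma distortion_update_lineMap_lt (hr : 1 ≤ r) (hint : Integrable (fun x => ‖x‖ ^ r) P)
    {a : ι → E} {i : ι} {C : Set E} (hC : MeasurableSet C)
    (hWC : {x : E | edist x (a i) < Metric.infEDist x (range a \ {a i})} ⊆ C)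
    (hCV : C ⊆ {x : E | edist x (a i) = Metric.infEDist x (range a)})
    {z : E} (hz : ∫ x in C, ‖x - z‖ ^ r ∂P < ∫ x in C, ‖x - a i‖ ^ r ∂P)
    {s : ℝ} (hs : s ∈ Ioc 0 1) :
    distortion P r (Function.update a i (AffineMap.lineMap (a i) z s)) < distortion P r a := by
  have : Nonempty ι := ⟨i⟩
  have hr0 : 0 ≤ r := zero_le_one.trans hr
  have hint' := integrable_norm_sub_rpow (zero_lt_one.trans_le hr) hint
  set y := AffineMap.lineMap (a i) z s
  set b := Function.update a i y
  refine integral_lt_integral_of_setIntegral_lt (integrable_iInf_norm_sub_rpow hr0 hint' b)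
    (integrable_iInf_norm_sub_rpow hr0 hint' a) hC ?_ fun x hx => ?_
  · have hinside : ∀ x ∈ C, (⨅ j, ‖x - b j‖) ^ r ≤ ‖x - y‖ ^ r := fun x _ =>
      Real.rpow_le_rpow (Real.iInf_nonneg fun j => norm_nonneg _)
        (by simpa [b] using iInf_norm_sub_le b x i) hr0
    calc ∫ x in C, (⨅ j, ‖x - b j‖) ^ r ∂P ≤ ∫ x in C, ‖x - y‖ ^ r ∂P :=
          setIntegral_mono_on (integrable_iInf_norm_sub_rpow hr0 hint' b).integrableOn
            (hint' y).integrableOn hC hinside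
      _ < ∫ x in C, ‖x - a i‖ ^ r ∂P :=
          (convexOn_integral_norm_sub_rpow hr fun c => (hint' c).restrict).apply_lineMap_lt
            trivial trivial hz hs
      _ = ∫ x in C, (⨅ j, ‖x - a j‖) ^ r ∂P := setIntegral_congr_fun hC fun x hx => by
          rw [iInf_norm_sub_eq_of_edist_eq_infEDist (hCV hx)]
  · have hfar : Metric.infEDist x (range a \ {a i}) ≤ edist x (a i) :=
      not_lt.mp fun h => hx (hWC h)
    exact Real.rpow_le_rpow (Real.iInf_nonneg fun j => norm_nonneg _)
      (iInf_norm_sub_update_le hfar y) hr0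

end Improvement

theorem not_local_min_of_improvable_component_general
    {E : Type*} [NormedAddCommGroup E] [NormedSpace ℝ E]
    [MeasurableSpace E] [BorelSpace E]
    (P : Measure E) [IsProbabilityMeasure P]
    (r : ℝ) (hr : 1 ≤ r) (hint : Integrable (fun x => ‖x‖ ^ r) P)
    (n : ℕ) (a : Fin n → E)
    (i : Fin n) (C : Set E) (hC : MeasurableSet C)
    (hWC : {x : E | edist x (a i) < infEdist x (Set.range a \ {a i})} ⊆ C)
    (hCV : C ⊆ {x : E | edist x (a i) = infEdist x (Set.range a)})
    (z : E) (hz : ∫ x in C, ‖x - z‖ ^ r ∂P < ∫ x in C, ‖x - a i‖ ^ r ∂P) :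
    ¬ IsLocalMin (fun b : Fin n → E => ∫ x, (⨅ j, ‖x - b j‖) ^ r ∂P) a := by
  intro hmin
  set path : ℝ → Fin n → E := fun s => Function.update a i (AffineMap.lineMap (a i) z s)
  have hpath0 : path 0 = a := by simp [path]
  have hpath : Continuous path := continuous_const.update i AffineMap.lineMap_continuous
  have hloc : IsLocalMin (distortion P r ∘ path) 0 :=
    IsLocalMin.comp_continuous (hpath0.symm ▸ hmin) hpath.continuousAt
  obtain ⟨s, hle, hs⟩ :=
    ((hloc.filter_mono nhdsWithin_le_nhds).and (Ioc_mem_nhdsGT zero_lt_one)).exists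
  rw [Function.comp_apply, hpath0] at hle
  exact (distortion_update_lineMap_lt hr hint hC hWC hCV hz hs).not_ge hle

/-- If some component `a i` can be strictly improved on a set `C` squeezed between its
open and closed Voronoi cells, then `a` is not a local minimum of the `L^r`-distortion. -/
theorem not_local_min_of_improvable_component
    {E : Type*} [NormedAddCommGroup E] [NormedSpace ℝ E] [CompleteSpace E]
    [SecondCountableTopology E] [MeasurableSpace E] [BorelSpace E]
    (P : Measure E) [IsProbabilityMeasure P]
    (r : ℝ) (hr : 1 ≤ r) (hint : Integrable (fun x => ‖x‖ ^ r) P)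
    (n : ℕ) (hn : 0 < n) (a : Fin n → E) (ha : Function.Injective a)
    (i : Fin n) (C : Set E) (hC : MeasurableSet C)
    (hWC : {x : E | edist x (a i) < infEdist x (Set.range a \ {a i})} ⊆ C)
    (hCV : C ⊆ {x : E | edist x (a i) = infEdist x (Set.range a)})
    (z : E) (hz : ∫ x in C, ‖x - z‖ ^ r ∂P < ∫ x in C, ‖x - a i‖ ^ r ∂P) :
    ¬ IsLocalMin (fun b : Fin n → E => ∫ x, (⨅ j, ‖x - b j‖) ^ r ∂P) a :=
  not_local_min_of_improvable_component_general P r hr hint n a i C hC hWC hCV z hz
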